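/- If θ = (w_1, w_2, a_1, a_2) is along a KKT-margin direction of a width-2 two-layer Leaky ReLU network on a symmetric dataset and a_1 > 0, a_2 < 0, then w_1 = −w_2 and a_1 = −a_2 = ‖w_1‖. -/

import Mathlib

open Finset

/-- Clarke subdifferential of the Leaky ReLU `φ(z) = max{z, αz}`. -/
def clarkeLeaky (α z : ℝ) : Set ℝ :=
  if 0 < z then {1} else if z < 0 then {α} else Set.Icc α 1

/-!
Put `s_k = ∑ λᵢ yᵢ h_{k,i} xᵢ`, so that stationarity reads `w_k = a_k s_k`. Pairing `w_k` with its
own stationarity equation and using `h z = φ z` for `h ∈ ∂φ(z)` gives `‖w_k‖ = |a_k|`, so `s₁, s₂`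
are unit vectors.

A support vector `xᵢ` has margin at most that of its mirror image `-xᵢ`. As
`φ z + φ (-z) = (1 - α)|z|`, for `yᵢ = 1` this says `a₁ |⟪w₁, xᵢ⟫| ≤ -a₂ |⟪w₂, xᵢ⟫|`, and
positivity of the margin then forces `⟪w₂, xᵢ⟫ < 0`, i.e. `h_{2,i} = α ≤ h_{1,i}` (for `yᵢ = -1`
the neurons swap roles). Hence every term of
`⟪s₁ - s₂, a₁² s₁ - a₂² s₂⟫ = ∑ λᵢ yᵢ (h_{1,i} - h_{2,i}) (a₁ ⟪w₁, xᵢ⟫ - a₂ ⟪w₂, xᵢ⟫)` is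
nonpositive, while for unit vectors the left side is `(a₁² + a₂²)/2 · ‖s₁ - s₂‖²`; so `s₁ = s₂`.

With `w_k = a_k s` and `tᵢ = ⟪s, xᵢ⟫`, the mirror comparison becomes `yᵢ |tᵢ| (a₁² - a₂²) ≤ 0` on
support vectors, and the output-weight equations become `∑ λᵢ yᵢ φ(tᵢ) = 1`,
`∑ λᵢ yᵢ φ(-tᵢ) = -1`. Adding them, `∑ λᵢ yᵢ |tᵢ| = 0`; the terms all have the sign of
`a₂² - a₁²` and do not all vanish (else `∑ λᵢ yᵢ φ(tᵢ) = 0`), hence `a₁² = a₂²`.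
-/

open scoped RealInnerProductSpace

def leakyRelu (α z : ℝ) : ℝ := max z (α * z)

section LeakyRelu

variable {α z : ℝ}

theorem leakyRelu_of_nonneg (hα1 : α ≤ 1) (hz : 0 ≤ z) : leakyRelu α z = z :=
  max_eq_left (by nlinarith)

theorem leakyRelu_of_nonpos (hα1 : α ≤ 1) (hz : z ≤ 0) : leakyRelu α z = α * z :=
  max_eq_right (by nlinarith)

@[simp]
theorem leakyRelu_zero : leakyRelu α 0 = 0 := by simp [leakyRelu]

theorem leakyRelu_le_abs (hα : 0 ≤ α) (hα1 : α ≤ 1) : leakyRelu α z ≤ |z| := by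
  rcases le_total 0 z with hz | hz
  · rw [leakyRelu_of_nonneg hα1 hz, abs_of_nonneg hz]
  · rw [leakyRelu_of_nonpos hα1 hz, abs_of_nonpos hz]
    nlinarith

theorem leakyRelu_add_leakyRelu_neg (hα1 : α ≤ 1) :
    leakyRelu α z + leakyRelu α (-z) = (1 - α) * |z| := by
  rcases le_total 0 z with hz | hz
  · rw [leakyRelu_of_nonneg hα1 hz, leakyRelu_of_nonpos hα1 (neg_nonpos.2 hz), abs_of_nonneg hz]
    ring
  · rw [leakyRelu_of_nonpos hα1 hz, leakyRelu_of_nonneg hα1 (neg_nonneg.2 hz), abs_of_nonpos hz]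
    ring

theorem leakyRelu_mul_of_nonneg {k : ℝ} (hk : 0 ≤ k) : leakyRelu α (k * z) = k * leakyRelu α z := by
  rw [leakyRelu, leakyRelu, mul_max_of_nonneg _ _ hk, mul_left_comm]

theorem leakyRelu_mul_of_nonpos {k : ℝ} (hk : k ≤ 0) :
    leakyRelu α (k * z) = -k * leakyRelu α (-z) := by
  rw [← leakyRelu_mul_of_nonneg (neg_nonneg.2 hk), neg_mul_neg]

end LeakyRelu

section ClarkeLeaky

variable {α z g : ℝ}

theorem mul_eq_leakyRelu_of_mem_clarkeLeaky (hα1 : α ≤ 1) (hg : g ∈ clarkeLeaky α z) :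
    g * z = leakyRelu α z := by
  unfold clarkeLeaky at hg
  split_ifs at hg with hpos hneg
  · rw [Set.mem_singleton_iff.1 hg, one_mul, leakyRelu_of_nonneg hα1 hpos.le]
  · rw [Set.mem_singleton_iff.1 hg, leakyRelu_of_nonpos hα1 hneg.le]
  · simp [le_antisymm (not_lt.1 hpos) (not_lt.1 hneg)]

theorem le_of_mem_clarkeLeaky (hα1 : α ≤ 1) (hg : g ∈ clarkeLeaky α z) : α ≤ g := by
  unfold clarkeLeaky at hg
  split_ifs at hg
  · rwa [Set.mem_singleton_iff.1 hg]
  · rw [Set.mem_singleton_iff.1 hg]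
  · exact hg.1

theorem eq_of_mem_clarkeLeaky_of_neg (hz : z < 0) (hg : g ∈ clarkeLeaky α z) : g = α := by
  rwa [clarkeLeaky, if_neg hz.not_gt, if_pos hz] at hg

end ClarkeLeaky

theorem mul_nonpos_of_nonneg_of_imp {a b : ℝ} (ha : 0 ≤ a) (hb : a ≠ 0 → b ≤ 0) : a * b ≤ 0 := by
  rcases eq_or_ne a 0 with rfl | h
  · rw [zero_mul]
  · exact mul_nonpos_of_nonneg_of_nonpos ha (hb h)

section MarginComparison

variable {α : ℝ}

theorem sub_mul_nonpos_of_margin_le_reflected {a b c e g h : ℝ} (hα : 0 ≤ α) (hα1 : α < 1)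
    (ha : 0 < a) (hg : g ∈ clarkeLeaky α c) (hh : h ∈ clarkeLeaky α e)
    (hpos : 0 < a * leakyRelu α c + b * leakyRelu α e)
    (hmin : a * leakyRelu α c + b * leakyRelu α e
      ≤ -(a * leakyRelu α (-c) + b * leakyRelu α (-e))) :
    (g - h) * (a * c - b * e) ≤ 0 := by
  have hcomp : a * |c| + b * |e| ≤ 0 := by
    have hc := leakyRelu_add_leakyRelu_neg (z := c) hα1.le
    have he := leakyRelu_add_leakyRelu_neg (z := e) hα1.le
    refine nonpos_of_mul_nonpos_right (a := 1 - α) ?_ (sub_pos.2 hα1)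
    linear_combination hmin - a * hc - b * he
  have hφc : a * leakyRelu α c ≤ a * |c| :=
    mul_le_mul_of_nonneg_left (leakyRelu_le_abs hα hα1.le) ha.le
  have he : e < 0 := by
    by_contra! he
    rw [leakyRelu_of_nonneg hα1.le he] at hpos
    rw [abs_of_nonneg he] at hcomp
    linarith
  rw [eq_of_mem_clarkeLeaky_of_neg he hh]
  refine mul_nonpos_of_nonneg_of_nonpos (sub_nonneg.2 (le_of_mem_clarkeLeaky hα1.le hg)) ?_
  rw [abs_of_neg he] at hcomp
  nlinarith [le_abs_self c]

theorem label_mul_sub_mul_nonpos_of_margin_le_reflected {a₁ a₂ c e g h y : ℝ} (hα : 0 ≤ α)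
    (hα1 : α < 1) (ha₁ : 0 < a₁) (ha₂ : a₂ < 0) (hy : y = 1 ∨ y = -1)
    (hg : g ∈ clarkeLeaky α c) (hh : h ∈ clarkeLeaky α e)
    (hpos : 0 < y * (a₁ * leakyRelu α c + a₂ * leakyRelu α e))
    (hmin : y * (a₁ * leakyRelu α c + a₂ * leakyRelu α e)
      ≤ -y * (a₁ * leakyRelu α (-c) + a₂ * leakyRelu α (-e))) :
    y * (g - h) * (a₁ * c - a₂ * e) ≤ 0 := by
  rcases hy with rfl | rfl
  · have := sub_mul_nonpos_of_margin_le_reflected (b := a₂) hα hα1 ha₁ hg hh (by linarith) (by linarith)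
    linarith
  · have := sub_mul_nonpos_of_margin_le_reflected (b := -a₁) hα hα1 (neg_pos.2 ha₂) hh hg
      (by linarith) (by linarith)
    linarith

theorem sq_sub_sq_mul_nonpos_of_margin_le_reflected {a₁ a₂ t y : ℝ} (hα1 : α < 1)
    (ha₁ : 0 ≤ a₁) (ha₂ : a₂ ≤ 0)
    (hmin : y * (a₁ * leakyRelu α (a₁ * t) + a₂ * leakyRelu α (a₂ * t))
      ≤ -y * (a₁ * leakyRelu α (-(a₁ * t)) + a₂ * leakyRelu α (-(a₂ * t)))) :
    y * |t| * (a₁ ^ 2 - a₂ ^ 2) ≤ 0 := by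
  rw [← mul_neg, ← mul_neg, leakyRelu_mul_of_nonneg ha₁, leakyRelu_mul_of_nonneg ha₁, leakyRelu_mul_of_nonpos ha₂,
    leakyRelu_mul_of_nonpos ha₂, neg_neg] at hmin
  refine nonpos_of_mul_nonpos_right (a := 1 - α) ?_ (sub_pos.2 hα1)
  linear_combination hmin - y * (a₁ ^ 2 - a₂ ^ 2) * leakyRelu_add_leakyRelu_neg (z := t) hα1.le

end MarginComparison

section Stationarity

variable {ι E : Type*} [Fintype ι] [NormedAddCommGroup E] [InnerProductSpace ℝ E] {α : ℝ}

theorem norm_eq_abs_of_stationary {x : ι → E} {r h : ι → ℝ} {w : E} {a : ℝ} (hα1 : α ≤ 1)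
    (hh : ∀ i, h i ∈ clarkeLeaky α ⟪w, x i⟫) (hw : w = ∑ i, (r i * a * h i) • x i)
    (ha : a = ∑ i, r i * leakyRelu α ⟪w, x i⟫) : ‖w‖ = |a| := by
  have hww : ⟪w, w⟫ = a * a := by
    calc ⟪w, w⟫ = ⟪w, ∑ i, (r i * a * h i) • x i⟫ := congrArg _ hw
      _ = ∑ i, r i * a * h i * ⟪w, x i⟫ := by simp only [inner_sum, real_inner_smul_right]
      _ = a * ∑ i, r i * leakyRelu α ⟪w, x i⟫ := by
          rw [mul_sum]
          refine sum_congr rfl fun i _ => ?_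
          rw [← mul_eq_leakyRelu_of_mem_clarkeLeaky hα1 (hh i)]
          ring
      _ = a * a := by rw [← ha]
  rw [← abs_norm, ← sq_eq_sq_iff_abs_eq_abs, ← real_inner_self_eq_norm_sq, hww, sq]

theorem eq_of_inner_sub_smul_sub_smul_nonpos {u v : E} {p q : ℝ} (hu : ‖u‖ = 1) (hv : ‖v‖ = 1)
    (hpq : 0 < p + q) (h : ⟪u - v, p • u - q • v⟫ ≤ 0) : u = v := by
  have hexp : 2 * ⟪u - v, p • u - q • v⟫ = (p + q) * ‖u - v‖ ^ 2 := by
    rw [norm_sub_sq_real, inner_sub_left, inner_sub_right, inner_sub_right, real_inner_smul_right,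
      real_inner_smul_right, real_inner_smul_right, real_inner_smul_right, real_inner_comm v u,
      real_inner_self_eq_norm_sq, real_inner_self_eq_norm_sq, hu, hv]
    ring
  have hsq : ‖u - v‖ ^ 2 ≤ 0 := nonpos_of_mul_nonpos_right (by linarith) hpq
  rw [← sub_eq_zero, ← norm_eq_zero]
  exact pow_eq_zero_iff (n := 2) two_ne_zero |>.1 (le_antisymm hsq (sq_nonneg _))

theorem exists_eq_smul_of_stationary {x : ι → E} {r h₁ h₂ : ι → ℝ} {w₁ w₂ : E} {a₁ a₂ : ℝ}
    (ha₁ : a₁ ≠ 0) (ha₂ : a₂ ≠ 0) (hn₁ : ‖w₁‖ = |a₁|) (hn₂ : ‖w₂‖ = |a₂|)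
    (hw₁ : w₁ = ∑ i, (r i * a₁ * h₁ i) • x i) (hw₂ : w₂ = ∑ i, (r i * a₂ * h₂ i) • x i)
    (hterm : ∀ i, r i * (h₁ i - h₂ i) * (a₁ * ⟪w₁, x i⟫ - a₂ * ⟪w₂, x i⟫) ≤ 0) :
    ∃ s : E, w₁ = a₁ • s ∧ w₂ = a₂ • s := by
  set s₁ := ∑ i, (r i * h₁ i) • x i
  set s₂ := ∑ i, (r i * h₂ i) • x i
  have hw₁' : w₁ = a₁ • s₁ := by
    rw [hw₁, smul_sum]
    exact sum_congr rfl fun i _ => by rw [smul_smul, mul_right_comm, mul_comm a₁]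
  have hw₂' : w₂ = a₂ • s₂ := by
    rw [hw₂, smul_sum]
    exact sum_congr rfl fun i _ => by rw [smul_smul, mul_right_comm, mul_comm a₂]
  have hunit {a : ℝ} {s : E} (ha : a ≠ 0) (hn : ‖a • s‖ = |a|) : ‖s‖ = 1 := by
    rwa [norm_smul, Real.norm_eq_abs, mul_eq_left₀ (abs_ne_zero.2 ha)] at hn
  have hinner : ⟪s₁ - s₂, a₁ ^ 2 • s₁ - a₂ ^ 2 • s₂⟫ ≤ 0 := by
    have hv : a₁ ^ 2 • s₁ - a₂ ^ 2 • s₂ = a₁ • w₁ - a₂ • w₂ := by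
      rw [hw₁', hw₂', smul_smul, smul_smul, sq, sq]
    rw [hv, ← sum_sub_distrib, sum_inner]
    refine sum_nonpos fun i _ => ?_
    rw [← sub_smul, real_inner_smul_left, inner_sub_right, real_inner_smul_right,
      real_inner_smul_right, real_inner_comm w₁, real_inner_comm w₂, ← mul_sub]
    exact hterm i
  have hs : s₁ = s₂ := eq_of_inner_sub_smul_sub_smul_nonpos (hunit ha₁ (hw₁' ▸ hn₁))
    (hunit ha₂ (hw₂' ▸ hn₂)) (by positivity) hinner
  exact ⟨s₁, hw₁', hs ▸ hw₂'⟩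

theorem eq_neg_of_stationary_of_margin {r t : ι → ℝ} {a₁ a₂ : ℝ} (hα1 : α < 1)
    (ha₁ : 0 < a₁) (ha₂ : a₂ < 0)
    (h₁ : a₁ = ∑ i, r i * leakyRelu α (a₁ * t i)) (h₂ : a₂ = ∑ i, r i * leakyRelu α (a₂ * t i))
    (hsign : ∀ i, r i * |t i| * (a₁ ^ 2 - a₂ ^ 2) ≤ 0) : a₁ = -a₂ := by
  simp only [leakyRelu_mul_of_nonneg ha₁.le, leakyRelu_mul_of_nonpos ha₂.le, mul_left_comm (r _),
    ← mul_sum] at h₁ h₂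
  have hs₁ : ∑ i, r i * leakyRelu α (t i) = 1 := mul_left_cancel₀ ha₁.ne' (by linarith)
  have hs₂ : ∑ i, r i * leakyRelu α (-t i) = -1 := mul_left_cancel₀ ha₂.ne (by linarith)
  have habs : ∑ i, r i * |t i| = 0 := by
    refine (mul_eq_zero.1 ?_).resolve_left (sub_pos.2 hα1).ne'
    simp only [mul_sum, mul_left_comm (1 - α), ← leakyRelu_add_leakyRelu_neg hα1.le, mul_add,
      sum_add_distrib, hs₁, hs₂, add_neg_cancel]
  suffices a₁ ^ 2 = a₂ ^ 2 by nlinarith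
  by_contra hne
  have hterm : ∀ i, r i * |t i| = 0 := fun i =>
    (mul_eq_zero.1 ((sum_eq_zero_iff_of_nonpos fun i _ => hsign i).1
      (by rw [← sum_mul, habs, zero_mul]) i (mem_univ i))).resolve_right (sub_ne_zero.2 hne)
  have : ∑ i, r i * leakyRelu α (t i) = 0 := sum_eq_zero fun i _ => by
    rcases mul_eq_zero.1 (hterm i) with h | h
    · rw [h, zero_mul]
    · rw [abs_eq_zero.1 h, leakyRelu_zero, mul_zero]
  linarith

end Stationarity

theorem stmt_10_general (d n : ℕ) (hn : 0 < n)
    (α : ℝ) (hα : 0 < α) (hα1 : α < 1)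
    (φ : ℝ → ℝ) (hφ : ∀ z, φ z = max z (α * z))
    (x : Fin n → EuclideanSpace ℝ (Fin d)) (y : Fin n → ℝ)
    (hy : ∀ i, y i = 1 ∨ y i = -1)
    (σ : Equiv.Perm (Fin n))
    (hxσ : ∀ i, x (σ i) = - x i) (hyσ : ∀ i, y (σ i) = - y i)
    (w1 w2 : EuclideanSpace ℝ (Fin d)) (a1 a2 : ℝ)
    (ha1 : 0 < a1) (ha2 : a2 < 0)
    (q : Fin n → ℝ)
    (hq : ∀ i, q i = y i * (a1 * φ (inner ℝ w1 (x i)) + a2 * φ (inner ℝ w2 (x i))))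
    (hqpos : ∀ i, 0 < q i)
    (lam : Fin n → ℝ) (hlam : ∀ i, 0 ≤ lam i)
    (h1 h2 : Fin n → ℝ)
    (hmem1 : ∀ i, h1 i ∈ clarkeLeaky α (inner ℝ w1 (x i)))
    (hmem2 : ∀ i, h2 i ∈ clarkeLeaky α (inner ℝ w2 (x i)))
    (hstat_w1 : w1 = ∑ i, (lam i * y i * a1 * h1 i) • x i)
    (hstat_w2 : w2 = ∑ i, (lam i * y i * a2 * h2 i) • x i)
    (hstat_a1 : a1 = ∑ i, lam i * y i * φ (inner ℝ w1 (x i)))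
    (hstat_a2 : a2 = ∑ i, lam i * y i * φ (inner ℝ w2 (x i)))
    (hcompl : ∀ i, q i ≠ Finset.univ.inf' ⟨⟨0, hn⟩, Finset.mem_univ _⟩ q → lam i = 0) :
    w1 = -w2 ∧ a1 = -a2 ∧ a1 = ‖w1‖ := by
  obtain rfl : φ = leakyRelu α := funext hφ
  have hmin (i) (hi : lam i ≠ 0) : y i * (a1 * leakyRelu α ⟪w1, x i⟫ + a2 * leakyRelu α ⟪w2, x i⟫)
      ≤ -y i * (a1 * leakyRelu α ⟪w1, -x i⟫ + a2 * leakyRelu α ⟪w2, -x i⟫) := by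
    have hle : q i ≤ q (σ i) := not_not.1 (mt (hcompl i) hi) ▸ inf'_le q (mem_univ (σ i))
    rwa [hq, hq, hxσ, hyσ] at hle
  have hn1 : ‖w1‖ = a1 := (norm_eq_abs_of_stationary hα1.le hmem1 hstat_w1 hstat_a1).trans
    (abs_of_pos ha1)
  have hn2 : ‖w2‖ = |a2| := norm_eq_abs_of_stationary hα1.le hmem2 hstat_w2 hstat_a2
  obtain ⟨s, rfl, rfl⟩ := exists_eq_smul_of_stationary ha1.ne' ha2.ne
    (hn1.trans (abs_of_pos ha1).symm) hn2 hstat_w1 hstat_w2 fun i => by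
      simpa only [mul_assoc] using mul_nonpos_of_nonneg_of_imp (hlam i) fun hi =>
        label_mul_sub_mul_nonpos_of_margin_le_reflected hα.le hα1 ha1 ha2 (hy i) (hmem1 i)
          (hmem2 i) (hq i ▸ hqpos i) (by simpa only [inner_neg_right] using hmin i hi)
  simp only [real_inner_smul_left, inner_neg_right] at hstat_a1 hstat_a2 hmin
  have hA : a1 = -a2 := eq_neg_of_stationary_of_margin hα1 ha1 ha2 hstat_a1 hstat_a2 fun i => by
    simpa only [mul_assoc] using mul_nonpos_of_nonneg_of_imp (hlam i) fun hi =>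
      sq_sub_sq_mul_nonpos_of_margin_le_reflected hα1 ha1.le ha2.le (hmin i hi)
  exact ⟨by rw [hA, neg_smul], hA, hn1.symm⟩

/-- If `θ = (w₁, w₂, a₁, a₂)` is along a KKT-margin direction of a width-2
two-layer Leaky ReLU network on a symmetric dataset and `a₁ > 0 > a₂`, then
`w₁ = −w₂` and `a₁ = −a₂ = ‖w₁‖`. -/
theorem stmt_10 (d n : ℕ) (hn : 0 < n)
    (α : ℝ) (hα : 0 < α) (hα1 : α < 1)
    (φ : ℝ → ℝ) (hφ : ∀ z, φ z = max z (α * z))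
    (x : Fin n → EuclideanSpace ℝ (Fin d)) (y : Fin n → ℝ)
    (hy : ∀ i, y i = 1 ∨ y i = -1) (hxnorm : ∀ i, ‖x i‖ ≤ 1)
    (σ : Equiv.Perm (Fin n))
    (hxσ : ∀ i, x (σ i) = - x i) (hyσ : ∀ i, y (σ i) = - y i)
    (w1 w2 : EuclideanSpace ℝ (Fin d)) (a1 a2 : ℝ)
    (ha1 : 0 < a1) (ha2 : a2 < 0)
    (q : Fin n → ℝ)
    (hq : ∀ i, q i = y i * (a1 * φ (inner ℝ w1 (x i)) + a2 * φ (inner ℝ w2 (x i))))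
    (hqpos : ∀ i, 0 < q i)
    (lam : Fin n → ℝ) (hlam : ∀ i, 0 ≤ lam i)
    (h1 h2 : Fin n → ℝ)
    (hmem1 : ∀ i, h1 i ∈ clarkeLeaky α (inner ℝ w1 (x i)))
    (hmem2 : ∀ i, h2 i ∈ clarkeLeaky α (inner ℝ w2 (x i)))
    (hstat_w1 : w1 = ∑ i, (lam i * y i * a1 * h1 i) • x i)
    (hstat_w2 : w2 = ∑ i, (lam i * y i * a2 * h2 i) • x i)
    (hstat_a1 : a1 = ∑ i, lam i * y i * φ (inner ℝ w1 (x i)))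
    (hstat_a2 : a2 = ∑ i, lam i * y i * φ (inner ℝ w2 (x i)))
    (hcompl : ∀ i, q i ≠ Finset.univ.inf' ⟨⟨0, hn⟩, Finset.mem_univ _⟩ q → lam i = 0) :
    w1 = -w2 ∧ a1 = -a2 ∧ a1 = ‖w1‖ :=
  stmt_10_general d n hn α hα hα1 φ hφ x y hy σ hxσ hyσ w1 w2 a1 a2 ha1 ha2 q hq hqpos lam hlam h1
    h2 hmem1 hmem2 hstat_w1 hstat_w2 hstat_a1 hstat_a2 hcompl
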